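/- Let λ ∈ L¹(Ω) satisfy 0 < Λ₁ ≤ ‖λ‖_{L¹} ≤ Λ₂, and define the operator E on C(Ω) by E[W](x) := (μ/(σF)) ∫_Ω (W(y)|λ(y)| + φ(y)) G[λ](y)^{σ−1} T(x,y)^{1−σ} dy. Then E maps C_{0+}(Ω) into itself and for all W₁, W₂ ∈ C_{0+}(Ω), ‖E[W₁] − E[W₂]‖_∞ ≤ (μ/σ)·(T_max/T_min)^{σ−1}·(Λ₂/Λ₁)·‖W₁ − W₂‖_∞; in particular, if (μ/σ)(T_max/T_min)^{σ−1}(Λ₂/Λ₁) < 1, then E is a contraction on C_{0+}(Ω) with respect to the sup norm. -/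

import Mathlib

open MeasureTheory Real Set

/-- The price index operator `G[λ](x) = [(1/F) ∫_Ω |λ(y)| T(x,y)^{1-σ} dy]^{1/(1-σ)}`. -/
noncomputable def priceIndex {n : ℕ} (Ω : Set (Fin n → ℝ)) (F σ : ℝ)
    (T : (Fin n → ℝ) → (Fin n → ℝ) → ℝ) (lam : (Fin n → ℝ) → ℝ)
    (x : Fin n → ℝ) : ℝ :=
  ((1 / F) * ∫ y in Ω, |lam y| * T x y ^ (1 - σ)) ^ (1 / (1 - σ))

/-- The operator `E` given by the right-hand side of the wage fixed-point equation. -/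
noncomputable def wageOp {n : ℕ} (Ω : Set (Fin n → ℝ)) (F σ μ : ℝ)
    (T : (Fin n → ℝ) → (Fin n → ℝ) → ℝ) (φ lam W : (Fin n → ℝ) → ℝ) :
    (Fin n → ℝ) → ℝ :=
  fun x => (μ / (σ * F)) *
    ∫ y in Ω, (W y * |lam y| + φ y) * priceIndex Ω F σ T lam y ^ (σ - 1) * T x y ^ (1 - σ)

/-- Sup norm of `f` over the region `Ω`. -/
noncomputable def supNormOn {n : ℕ} (Ω : Set (Fin n → ℝ)) (f : (Fin n → ℝ) → ℝ) : ℝ :=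
  sSup ((fun x => |f x|) '' Ω)

/-!
Write `I(y) = ∫_Ω |λ(z)| T(y,z)^{1-σ} dz`, so that `G[λ](y)^{σ-1} = F / I(y)`. Since
`T^{1-σ} ≥ T_max^{1-σ}` on `Ω × Ω`, `I ≥ Λ₁ T_max^{1-σ}`, hence `G[λ]^{σ-1} ≤ F T_max^{σ-1} / Λ₁`
is bounded, and it is continuous because `I` is. The operator `E` is affine in `W` with linear
part `(μ/(σF)) ∫ W |λ| G^{σ-1} T(x,·)^{1-σ}`; bounding `T(x,·)^{1-σ} ≤ T_min^{1-σ}` and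
`∫ |λ| ≤ Λ₂` yields the Lipschitz constant `(μ/σ) (T_max/T_min)^{σ-1} Λ₂/Λ₁`. Continuity of
`E[W]` is dominated convergence: the kernel is continuous, hence bounded, on the compact
`Ω × Ω`, and the weight `(W|λ| + φ) G^{σ-1}` is integrable.
-/

section ParametricIntegral

variable {α β : Type*} [TopologicalSpace α] [FirstCountableTopology α] [TopologicalSpace β]
  [T2Space β] [MeasurableSpace β] [OpensMeasurableSpace β] {μ : Measure β} {s : Set α} {t : Set β}
  {K : α → β → ℝ} {g : β → ℝ}

theorem continuousOn_setIntegral_mul_kernel (hs : IsCompact s) (ht : IsCompact t)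
    (hK : ContinuousOn (fun p : α × β => K p.1 p.2) (s ×ˢ t)) (hg : IntegrableOn g t μ) :
    ContinuousOn (fun x => ∫ y in t, g y * K x y ∂μ) s := by
  obtain ⟨B, hB⟩ := (hs.prod ht).exists_bound_of_continuousOn hK
  refine continuousOn_of_dominated (bound := fun y => ‖g y‖ * B) (fun x hx => ?_)
    (fun x hx => ?_) (hg.norm.mul_const B) ?_
  · exact (hg.mul_continuousOn (hK.uncurry_left x hx) ht).aestronglyMeasurable
  · filter_upwards [ae_restrict_mem ht.measurableSet] with y hy
    rw [norm_mul]
    exact mul_le_mul_of_nonneg_left (hB (x, y) ⟨hx, hy⟩) (norm_nonneg _)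
  · filter_upwards [ae_restrict_mem ht.measurableSet] with y hy
    exact continuousOn_const.mul (hK.uncurry_right y hy)

end ParametricIntegral

theorem rpow_mem_Icc_of_nonpos {a b t r : ℝ} (ha : 0 < a) (ht : t ∈ Icc a b) (hr : r ≤ 0) :
    t ^ r ∈ Icc (b ^ r) (a ^ r) :=
  ⟨rpow_le_rpow_of_nonpos (ha.trans_le ht.1) ht.2 hr, rpow_le_rpow_of_nonpos ha ht.1 hr⟩

theorem rpow_one_sub_div_rpow_one_sub {x y σ : ℝ} (hx : 0 < x) (hy : 0 < y) :
    y ^ (1 - σ) / x ^ (1 - σ) = (x / y) ^ (σ - 1) := by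
  rw [← div_rpow hy.le hx.le, ← inv_div, inv_rpow (div_nonneg hx.le hy.le), ← rpow_neg
    (div_nonneg hx.le hy.le), neg_sub]

section SupNorm

variable {n : ℕ} {Ω : Set (Fin n → ℝ)} {f : (Fin n → ℝ) → ℝ}

theorem supNormOn_nonneg : 0 ≤ supNormOn Ω f :=
  Real.sSup_nonneg <| by rintro _ ⟨x, -, rfl⟩; exact abs_nonneg _

theorem abs_le_supNormOn (hΩ : IsCompact Ω) (hf : ContinuousOn f Ω) {x : Fin n → ℝ}
    (hx : x ∈ Ω) : |f x| ≤ supNormOn Ω f :=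
  le_csSup (hΩ.bddAbove_image hf.abs) ⟨x, hx, rfl⟩

theorem supNormOn_le {c : ℝ} (hc : 0 ≤ c) (h : ∀ x ∈ Ω, |f x| ≤ c) : supNormOn Ω f ≤ c :=
  Real.sSup_le (by rintro _ ⟨x, hx, rfl⟩; exact h x hx) hc

end SupNorm

noncomputable def marketAccess {n : ℕ} (Ω : Set (Fin n → ℝ)) (σ : ℝ)
    (T : (Fin n → ℝ) → (Fin n → ℝ) → ℝ) (lam : (Fin n → ℝ) → ℝ) (y : Fin n → ℝ) : ℝ :=
  ∫ z in Ω, |lam z| * T y z ^ (1 - σ)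

section WageOperator

variable {n : ℕ} {Ω : Set (Fin n → ℝ)} {T : (Fin n → ℝ) → (Fin n → ℝ) → ℝ}
  {σ μ F a b Λ₁ Λ₂ : ℝ} {φ lam W W₁ W₂ : (Fin n → ℝ) → ℝ}

theorem IntegrableOn.mul_rpow_kernel {g : (Fin n → ℝ) → ℝ} (hΩ : IsCompact Ω)
    (hK : ContinuousOn (fun p => T p.1 p.2 ^ (1 - σ)) (Ω ×ˢ Ω)) (hg : IntegrableOn g Ω)
    {x : Fin n → ℝ} (hx : x ∈ Ω) : IntegrableOn (fun y => g y * T x y ^ (1 - σ)) Ω :=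
  hg.mul_continuousOn (hK.uncurry_left (f := fun x y => T x y ^ (1 - σ)) x hx) hΩ

theorem priceIndex_rpow_sub_one (hF : 0 ≤ F) (hσ : σ ≠ 1) {y : Fin n → ℝ}
    (hI : 0 ≤ marketAccess Ω σ T lam y) :
    priceIndex Ω F σ T lam y ^ (σ - 1) = F / marketAccess Ω σ T lam y := by
  have hexp : 1 / (1 - σ) * (σ - 1) = -1 := by
    field_simp [sub_ne_zero.2 hσ.symm]
    ring
  rw [priceIndex, ← marketAccess, ← rpow_mul (by positivity), hexp, rpow_neg_one, mul_inv,
    one_div, inv_inv, div_eq_mul_inv]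

theorem continuousOn_marketAccess (hΩ : IsCompact Ω)
    (hK : ContinuousOn (fun p => T p.1 p.2 ^ (1 - σ)) (Ω ×ˢ Ω)) (hlam : IntegrableOn lam Ω) :
    ContinuousOn (marketAccess Ω σ T lam) Ω :=
  continuousOn_setIntegral_mul_kernel hΩ hΩ hK hlam.abs

theorem mul_le_marketAccess (hΩ : IsCompact Ω)
    (hK : ContinuousOn (fun p => T p.1 p.2 ^ (1 - σ)) (Ω ×ˢ Ω))
    (ha : 0 ≤ a) (hKa : ∀ x ∈ Ω, ∀ y ∈ Ω, a ≤ T x y ^ (1 - σ))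
    (hlam : IntegrableOn lam Ω) (h₁ : Λ₁ ≤ ∫ z in Ω, |lam z|) {y : Fin n → ℝ} (hy : y ∈ Ω) :
    Λ₁ * a ≤ marketAccess Ω σ T lam y :=
  calc Λ₁ * a ≤ (∫ z in Ω, |lam z|) * a := mul_le_mul_of_nonneg_right h₁ ha
    _ = ∫ z in Ω, |lam z| * a := (integral_mul_const a _).symm
    _ ≤ marketAccess Ω σ T lam y :=
      setIntegral_mono_on (hlam.abs.mul_const a)
        (IntegrableOn.mul_rpow_kernel hΩ hK hlam.abs hy) hΩ.measurableSet
        fun z hz => mul_le_mul_of_nonneg_left (hKa y hy z hz) (abs_nonneg _)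

theorem priceIndex_rpow_sub_one_mem_Icc (hΩ : IsCompact Ω) (hF : 0 ≤ F) (hσ : σ ≠ 1)
    (hK : ContinuousOn (fun p => T p.1 p.2 ^ (1 - σ)) (Ω ×ˢ Ω))
    (ha : 0 < a) (hKa : ∀ x ∈ Ω, ∀ y ∈ Ω, a ≤ T x y ^ (1 - σ))
    (hlam : IntegrableOn lam Ω) (hΛ₁ : 0 < Λ₁) (h₁ : Λ₁ ≤ ∫ z in Ω, |lam z|)
    {y : Fin n → ℝ} (hy : y ∈ Ω) :
    priceIndex Ω F σ T lam y ^ (σ - 1) ∈ Icc 0 (F / (Λ₁ * a)) := by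
  have hI := mul_le_marketAccess hΩ hK ha.le hKa hlam h₁ hy
  have hpos : 0 < Λ₁ * a := mul_pos hΛ₁ ha
  rw [priceIndex_rpow_sub_one hF hσ (hpos.le.trans hI)]
  exact ⟨div_nonneg hF (hpos.le.trans hI), div_le_div_of_nonneg_left hF hpos hI⟩

theorem continuousOn_priceIndex_rpow_sub_one (hΩ : IsCompact Ω) (hF : 0 ≤ F) (hσ : σ ≠ 1)
    (hK : ContinuousOn (fun p => T p.1 p.2 ^ (1 - σ)) (Ω ×ˢ Ω))
    (ha : 0 < a) (hKa : ∀ x ∈ Ω, ∀ y ∈ Ω, a ≤ T x y ^ (1 - σ))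
    (hlam : IntegrableOn lam Ω) (hΛ₁ : 0 < Λ₁) (h₁ : Λ₁ ≤ ∫ z in Ω, |lam z|) :
    ContinuousOn (fun y => priceIndex Ω F σ T lam y ^ (σ - 1)) Ω := by
  have hI : ∀ y ∈ Ω, 0 < marketAccess Ω σ T lam y := fun y hy =>
    (mul_pos hΛ₁ ha).trans_le (mul_le_marketAccess hΩ hK ha.le hKa hlam h₁ hy)
  exact (continuousOn_const.div (continuousOn_marketAccess hΩ hK hlam) fun y hy => (hI y hy).ne')
    |>.congr fun y hy => priceIndex_rpow_sub_one hF hσ (hI y hy).le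

theorem integrableOn_wageOp_weight (hΩ : IsCompact Ω) (hW : ContinuousOn W Ω)
    (hlam : IntegrableOn lam Ω) (hφ : IntegrableOn φ Ω)
    (hG : ContinuousOn (fun y => priceIndex Ω F σ T lam y ^ (σ - 1)) Ω) :
    IntegrableOn (fun y => (W y * |lam y| + φ y) * priceIndex Ω F σ T lam y ^ (σ - 1)) Ω :=
  IntegrableOn.mul_continuousOn ((IntegrableOn.continuousOn_mul hW hlam.abs hΩ).add hφ) hG hΩ

theorem continuousOn_wageOp (hΩ : IsCompact Ω)
    (hK : ContinuousOn (fun p => T p.1 p.2 ^ (1 - σ)) (Ω ×ˢ Ω)) (hW : ContinuousOn W Ω)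
    (hlam : IntegrableOn lam Ω) (hφ : IntegrableOn φ Ω)
    (hG : ContinuousOn (fun y => priceIndex Ω F σ T lam y ^ (σ - 1)) Ω) :
    ContinuousOn (wageOp Ω F σ μ T φ lam W) Ω :=
  continuousOn_const.mul <| continuousOn_setIntegral_mul_kernel hΩ hΩ hK
    (integrableOn_wageOp_weight hΩ hW hlam hφ hG)

theorem wageOp_nonneg (hΩ : MeasurableSet Ω) (hμ : 0 ≤ μ) (hσ : 0 ≤ σ) (hF : 0 ≤ F)
    (hK : ∀ x ∈ Ω, ∀ y ∈ Ω, 0 ≤ T x y ^ (1 - σ))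
    (hG : ∀ y ∈ Ω, 0 ≤ priceIndex Ω F σ T lam y ^ (σ - 1))
    (hW : ∀ y ∈ Ω, 0 ≤ W y) (hφ : ∀ᵐ y ∂volume.restrict Ω, 0 ≤ φ y)
    {x : Fin n → ℝ} (hx : x ∈ Ω) : 0 ≤ wageOp Ω F σ μ T φ lam W x := by
  refine mul_nonneg (by positivity) (integral_nonneg_of_ae ?_)
  filter_upwards [ae_restrict_mem hΩ, hφ] with y hy hφy
  have := hW y hy
  have := hG y hy
  have := hK x hx y hy
  positivity

theorem wageOp_sub_wageOp (hΩ : IsCompact Ω)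
    (hK : ContinuousOn (fun p => T p.1 p.2 ^ (1 - σ)) (Ω ×ˢ Ω))
    (hW₁ : ContinuousOn W₁ Ω) (hW₂ : ContinuousOn W₂ Ω)
    (hlam : IntegrableOn lam Ω) (hφ : IntegrableOn φ Ω)
    (hG : ContinuousOn (fun y => priceIndex Ω F σ T lam y ^ (σ - 1)) Ω)
    {x : Fin n → ℝ} (hx : x ∈ Ω) :
    wageOp Ω F σ μ T φ lam W₁ x - wageOp Ω F σ μ T φ lam W₂ x = μ / (σ * F) *
      ∫ y in Ω, (W₁ y - W₂ y) * |lam y| * priceIndex Ω F σ T lam y ^ (σ - 1) * T x y ^ (1 - σ) := by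
  have hint : ∀ W, ContinuousOn W Ω → IntegrableOn (fun y =>
      (W y * |lam y| + φ y) * priceIndex Ω F σ T lam y ^ (σ - 1) * T x y ^ (1 - σ)) Ω :=
    fun W hW => IntegrableOn.mul_rpow_kernel hΩ hK (integrableOn_wageOp_weight hΩ hW hlam hφ hG) hx
  rw [wageOp, wageOp, ← mul_sub, ← integral_sub (hint W₁ hW₁) (hint W₂ hW₂)]
  congr 2 with y
  ring

theorem abs_wageOp_sub_le_mul_integral (hΩ : IsCompact Ω) (hσ : 0 ≤ σ) (hF : 0 ≤ F)
    (hμ : 0 ≤ μ) (hK : ContinuousOn (fun p => T p.1 p.2 ^ (1 - σ)) (Ω ×ˢ Ω))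
    (hKb : ∀ x ∈ Ω, ∀ y ∈ Ω, T x y ^ (1 - σ) ∈ Icc 0 b)
    (hW₁ : ContinuousOn W₁ Ω) (hW₂ : ContinuousOn W₂ Ω)
    (hlam : IntegrableOn lam Ω) (hφ : IntegrableOn φ Ω)
    (hGc : ContinuousOn (fun y => priceIndex Ω F σ T lam y ^ (σ - 1)) Ω) {C : ℝ}
    (hG : ∀ y ∈ Ω, priceIndex Ω F σ T lam y ^ (σ - 1) ∈ Icc 0 C)
    {N : ℝ} (hN : 0 ≤ N) (hWN : ∀ y ∈ Ω, |W₁ y - W₂ y| ≤ N) {x : Fin n → ℝ} (hx : x ∈ Ω) :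
    |wageOp Ω F σ μ T φ lam W₁ x - wageOp Ω F σ μ T φ lam W₂ x| ≤
      μ / (σ * F) * (N * C * b * ∫ y in Ω, |lam y|) := by
  rw [wageOp_sub_wageOp hΩ hK hW₁ hW₂ hlam hφ hGc hx, abs_mul, abs_of_nonneg (by positivity),
    ← integral_const_mul]
  refine mul_le_mul_of_nonneg_left ?_ (by positivity)
  rw [← norm_eq_abs]
  refine norm_integral_le_of_norm_le (hlam.abs.const_mul _) ?_
  filter_upwards [ae_restrict_mem hΩ.measurableSet] with y hy
  obtain ⟨hG0, hGC⟩ := hG y hy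
  obtain ⟨hK0, hKb⟩ := hKb x hx y hy
  rw [norm_eq_abs, abs_mul, abs_mul, abs_mul, abs_abs, abs_of_nonneg hG0, abs_of_nonneg hK0]
  calc |W₁ y - W₂ y| * |lam y| * priceIndex Ω F σ T lam y ^ (σ - 1) * T x y ^ (1 - σ)
      ≤ N * |lam y| * C * b := by
        have hC : 0 ≤ C := hG0.trans hGC
        gcongr
        exact hWN y hy
    _ = N * C * b * |lam y| := by ring

theorem abs_wageOp_sub_le (hΩ : IsCompact Ω) (hσ : 0 < σ) (hF : 0 < F) (hμ : 0 ≤ μ)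
    (hK : ContinuousOn (fun p => T p.1 p.2 ^ (1 - σ)) (Ω ×ˢ Ω))
    (ha : 0 < a) (hKab : ∀ x ∈ Ω, ∀ y ∈ Ω, T x y ^ (1 - σ) ∈ Icc a b)
    (hW₁ : ContinuousOn W₁ Ω) (hW₂ : ContinuousOn W₂ Ω)
    (hlam : IntegrableOn lam Ω) (hφ : IntegrableOn φ Ω)
    (hGc : ContinuousOn (fun y => priceIndex Ω F σ T lam y ^ (σ - 1)) Ω) (hΛ₁ : 0 < Λ₁)
    (hG : ∀ y ∈ Ω, priceIndex Ω F σ T lam y ^ (σ - 1) ∈ Icc 0 (F / (Λ₁ * a)))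
    (h₂ : ∫ y in Ω, |lam y| ≤ Λ₂)
    {N : ℝ} (hN : 0 ≤ N) (hWN : ∀ y ∈ Ω, |W₁ y - W₂ y| ≤ N) {x : Fin n → ℝ} (hx : x ∈ Ω) :
    |wageOp Ω F σ μ T φ lam W₁ x - wageOp Ω F σ μ T φ lam W₂ x| ≤
      μ / σ * (b / a) * (Λ₂ / Λ₁) * N := by
  have hb : 0 ≤ b := ha.le.trans ((hKab x hx x hx).1.trans (hKab x hx x hx).2)
  have hK0b : ∀ x ∈ Ω, ∀ y ∈ Ω, T x y ^ (1 - σ) ∈ Icc 0 b := fun x hx y hy =>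
    ⟨ha.le.trans (hKab x hx y hy).1, (hKab x hx y hy).2⟩
  calc _ ≤ μ / (σ * F) * (N * (F / (Λ₁ * a)) * b * ∫ y in Ω, |lam y|) :=
        abs_wageOp_sub_le_mul_integral hΩ hσ.le hF.le hμ hK hK0b hW₁ hW₂ hlam hφ hGc hG hN hWN hx
    _ = μ / σ * (b / a) * ((∫ y in Ω, |lam y|) / Λ₁) * N := by
        field_simp
    _ ≤ μ / σ * (b / a) * (Λ₂ / Λ₁) * N := by gcongr

end WageOperator

theorem wage_operator_contraction_general {n : ℕ} (Ω : Set (Fin n → ℝ))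
    (hΩc : IsCompact Ω) (hΩpos : 0 < volume Ω)
    (T : (Fin n → ℝ) → (Fin n → ℝ) → ℝ)
    (hTcont : ContinuousOn (fun p : (Fin n → ℝ) × (Fin n → ℝ) => T p.1 p.2) (Ω ×ˢ Ω))
    (Tmin Tmax : ℝ) (hTmin : 1 ≤ Tmin)
    (hT : ∀ x ∈ Ω, ∀ y ∈ Ω, T x y ∈ Icc Tmin Tmax)
    (σ μ F : ℝ) (hσ : 1 < σ) (hμ : μ ∈ Ioo (0 : ℝ) 1) (hF : 0 < F)
    (φ : (Fin n → ℝ) → ℝ) (hφint : IntegrableOn φ Ω)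
    (hφ0 : ∀ᵐ x ∂(volume.restrict Ω), 0 ≤ φ x)
    (lam : (Fin n → ℝ) → ℝ) (hlam : IntegrableOn lam Ω)
    (Λ₁ Λ₂ : ℝ) (hΛ₁ : 0 < Λ₁)
    (h₁ : Λ₁ ≤ ∫ x in Ω, |lam x|) (h₂ : (∫ x in Ω, |lam x|) ≤ Λ₂) :
    (∀ W : (Fin n → ℝ) → ℝ, ContinuousOn W Ω → (∀ x ∈ Ω, 0 ≤ W x) →
      ContinuousOn (wageOp Ω F σ μ T φ lam W) Ω ∧
        ∀ x ∈ Ω, 0 ≤ wageOp Ω F σ μ T φ lam W x) ∧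
    (∀ W₁ W₂ : (Fin n → ℝ) → ℝ,
      ContinuousOn W₁ Ω → (∀ x ∈ Ω, 0 ≤ W₁ x) →
      ContinuousOn W₂ Ω → (∀ x ∈ Ω, 0 ≤ W₂ x) →
      supNormOn Ω (fun x => wageOp Ω F σ μ T φ lam W₁ x - wageOp Ω F σ μ T φ lam W₂ x) ≤
        μ / σ * (Tmax / Tmin) ^ (σ - 1) * (Λ₂ / Λ₁) *
          supNormOn Ω (fun x => W₁ x - W₂ x)) ∧
    (μ / σ * (Tmax / Tmin) ^ (σ - 1) * (Λ₂ / Λ₁) < 1 →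
      ∃ c : ℝ, 0 ≤ c ∧ c < 1 ∧
        ∀ W₁ W₂ : (Fin n → ℝ) → ℝ,
          ContinuousOn W₁ Ω → (∀ x ∈ Ω, 0 ≤ W₁ x) →
          ContinuousOn W₂ Ω → (∀ x ∈ Ω, 0 ≤ W₂ x) →
          supNormOn Ω (fun x => wageOp Ω F σ μ T φ lam W₁ x - wageOp Ω F σ μ T φ lam W₂ x) ≤
            c * supNormOn Ω (fun x => W₁ x - W₂ x)) := by
  obtain ⟨x₀, hx₀⟩ := nonempty_of_measure_ne_zero hΩpos.ne'
  have hTmin0 : 0 < Tmin := by linarith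
  have hTmax0 : 0 < Tmax := hTmin0.trans_le ((hT x₀ hx₀ x₀ hx₀).1.trans (hT x₀ hx₀ x₀ hx₀).2)
  have hΛ₂ : 0 < Λ₂ := hΛ₁.trans_le (h₁.trans h₂)
  have hK : ContinuousOn (fun p => T p.1 p.2 ^ (1 - σ)) (Ω ×ˢ Ω) :=
    hTcont.rpow_const fun p hp => Or.inl (hTmin0.trans_le (hT _ hp.1 _ hp.2).1).ne'
  have hKab : ∀ x ∈ Ω, ∀ y ∈ Ω, T x y ^ (1 - σ) ∈ Icc (Tmax ^ (1 - σ)) (Tmin ^ (1 - σ)) :=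
    fun x hx y hy => rpow_mem_Icc_of_nonpos hTmin0 (hT x hx y hy) (by linarith)
  have ha : 0 < Tmax ^ (1 - σ) := by positivity
  have hKa := fun x hx y hy => (hKab x hx y hy).1
  have hG := fun y (hy : y ∈ Ω) =>
    priceIndex_rpow_sub_one_mem_Icc hΩc hF.le hσ.ne' hK ha hKa hlam hΛ₁ h₁ (F := F) hy
  have hGc := continuousOn_priceIndex_rpow_sub_one hΩc hF.le hσ.ne' hK ha hKa hlam hΛ₁ h₁
  have hLip : ∀ W₁ W₂ : (Fin n → ℝ) → ℝ, ContinuousOn W₁ Ω → (∀ x ∈ Ω, 0 ≤ W₁ x) →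
      ContinuousOn W₂ Ω → (∀ x ∈ Ω, 0 ≤ W₂ x) →
      supNormOn Ω (fun x => wageOp Ω F σ μ T φ lam W₁ x - wageOp Ω F σ μ T φ lam W₂ x) ≤
        μ / σ * (Tmax / Tmin) ^ (σ - 1) * (Λ₂ / Λ₁) * supNormOn Ω (fun x => W₁ x - W₂ x) := by
    intro W₁ W₂ hW₁ _ hW₂ _
    rw [← rpow_one_sub_div_rpow_one_sub hTmax0 hTmin0]
    exact supNormOn_le (mul_nonneg (by have := hμ.1; positivity) supNormOn_nonneg)
      fun x hx => abs_wageOp_sub_le hΩc (by linarith) hF hμ.1.le hK ha hKab hW₁ hW₂ hlam hφint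
        hGc hΛ₁ hG h₂ supNormOn_nonneg (fun y hy => abs_le_supNormOn hΩc (hW₁.sub hW₂) hy) hx
  refine ⟨fun W hW hW0 => ⟨continuousOn_wageOp hΩc hK hW hlam hφint hGc, fun x hx => ?_⟩,
    hLip, fun hL => ⟨_, by have := hμ.1; positivity, hL, hLip⟩⟩
  exact wageOp_nonneg hΩc.measurableSet hμ.1.le (by linarith) hF.le
    (fun x hx y hy => ha.le.trans (hKa x hx y hy)) (fun y hy => (hG y hy).1) hW0 hφ0 hx

theorem wage_operator_contraction {n : ℕ} (Ω : Set (Fin n → ℝ))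
    (hΩc : IsCompact Ω) (hΩpos : 0 < volume Ω)
    (T : (Fin n → ℝ) → (Fin n → ℝ) → ℝ)
    (hTcont : ContinuousOn (fun p : (Fin n → ℝ) × (Fin n → ℝ) => T p.1 p.2) (Ω ×ˢ Ω))
    (Tmin Tmax : ℝ) (hTmin : 1 ≤ Tmin)
    (hT : ∀ x ∈ Ω, ∀ y ∈ Ω, T x y ∈ Icc Tmin Tmax)
    (σ μ F Φ : ℝ) (hσ : 1 < σ) (hμ : μ ∈ Ioo (0 : ℝ) 1) (hF : 0 < F) (hΦ : 0 < Φ)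
    (φ : (Fin n → ℝ) → ℝ) (hφint : IntegrableOn φ Ω)
    (hφ0 : ∀ᵐ x ∂(volume.restrict Ω), 0 ≤ φ x) (hφΦ : (∫ x in Ω, φ x) = Φ)
    (lam : (Fin n → ℝ) → ℝ) (hlam : IntegrableOn lam Ω)
    (Λ₁ Λ₂ : ℝ) (hΛ₁ : 0 < Λ₁)
    (h₁ : Λ₁ ≤ ∫ x in Ω, |lam x|) (h₂ : (∫ x in Ω, |lam x|) ≤ Λ₂) :
    (∀ W : (Fin n → ℝ) → ℝ, ContinuousOn W Ω → (∀ x ∈ Ω, 0 ≤ W x) →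
      ContinuousOn (wageOp Ω F σ μ T φ lam W) Ω ∧
        ∀ x ∈ Ω, 0 ≤ wageOp Ω F σ μ T φ lam W x) ∧
    (∀ W₁ W₂ : (Fin n → ℝ) → ℝ,
      ContinuousOn W₁ Ω → (∀ x ∈ Ω, 0 ≤ W₁ x) →
      ContinuousOn W₂ Ω → (∀ x ∈ Ω, 0 ≤ W₂ x) →
      supNormOn Ω (fun x => wageOp Ω F σ μ T φ lam W₁ x - wageOp Ω F σ μ T φ lam W₂ x) ≤
        μ / σ * (Tmax / Tmin) ^ (σ - 1) * (Λ₂ / Λ₁) *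
          supNormOn Ω (fun x => W₁ x - W₂ x)) ∧
    (μ / σ * (Tmax / Tmin) ^ (σ - 1) * (Λ₂ / Λ₁) < 1 →
      ∃ c : ℝ, 0 ≤ c ∧ c < 1 ∧
        ∀ W₁ W₂ : (Fin n → ℝ) → ℝ,
          ContinuousOn W₁ Ω → (∀ x ∈ Ω, 0 ≤ W₁ x) →
          ContinuousOn W₂ Ω → (∀ x ∈ Ω, 0 ≤ W₂ x) →
          supNormOn Ω (fun x => wageOp Ω F σ μ T φ lam W₁ x - wageOp Ω F σ μ T φ lam W₂ x) ≤
            c * supNormOn Ω (fun x => W₁ x - W₂ x)) :=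
  wage_operator_contraction_general Ω hΩc hΩpos T hTcont Tmin Tmax hTmin hT σ μ F hσ hμ hF φ hφint
    hφ0 lam hlam Λ₁ Λ₂ hΛ₁ h₁ h₂
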